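/- (Main theorem) Let Ω ⊆ ℝ^N be open (N ≥ 1) and φ : Ω → ℝ a pointwise differentiable solution of the eikonal equation |∇φ(x)| = 1 for all x ∈ Ω. Then ∇φ is locally Lipschitz in Ω; equivalently, φ is locally C^{1,1} in Ω. -/

import Mathlib

/-!
If `closedBall x t ⊆ Ω`, the maximum `M s` of `φ` over `closedBall x s` satisfies
`M s ≤ φ x + s` (as `φ` is 1-Lipschitz) and grows at unit speed (moving from a maximum point
along its gradient), so `M t = φ x + t`. The point where this is attained must be
`x + t • ∇φ x`, and symmetrically `φ (x - t • ∇φ x) = φ x - t`. Comparing `φ z` with these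
two values through the Lipschitz bound squeezes `φ z` between `φ x + ⟪∇φ x, z - x⟫ ± ‖z - x‖² / t`.
A function whose first-order Taylor error is `O(‖z - x‖²)` uniformly has a Lipschitz gradient.
-/

open Metric Set Filter Topology InnerProductSpace
open scoped RealInnerProductSpace NNReal Gradient Pointwise

variable {E : Type*} [NormedAddCommGroup E] [InnerProductSpace ℝ E]

theorem norm_sub_smul_le_of_norm_eq_one {p a : E} (hp : ‖p‖ = 1) {t : ℝ} (ha : 2 * ‖a‖ ≤ t) :
    ‖a - t • p‖ ≤ t - ⟪p, a⟫ + t⁻¹ * ‖a‖ ^ 2 := by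
  have hpa : |⟪p, a⟫| ≤ ‖a‖ := by simpa [hp] using abs_real_inner_le_norm p a
  have hu : t * (t⁻¹ * ‖a‖ ^ 2) = ‖a‖ ^ 2 := by
    rcases eq_or_ne t 0 with rfl | ht
    · simp [norm_eq_zero.mp (by linarith [norm_nonneg a] : ‖a‖ = 0)]
    · field_simp
  have hsq : ‖a - t • p‖ ^ 2 = t ^ 2 - 2 * t * ⟪p, a⟫ + ‖a‖ ^ 2 := by
    rw [norm_sub_sq_real, real_inner_smul_right, norm_smul, Real.norm_eq_abs, mul_pow, sq_abs,
      real_inner_comm, hp]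
    ring
  have hpa' := abs_le.mp hpa
  have hinv : 0 ≤ t⁻¹ * ‖a‖ ^ 2 := by
    have : 0 ≤ t := by linarith [norm_nonneg a]
    positivity
  -- the difference of the squares of the two sides is `(⟪p, a⟫ - t⁻¹ ‖a‖²)² + ‖a‖²`
  refine (pow_le_pow_iff_left₀ (norm_nonneg _) (by linarith) two_ne_zero).mp ?_
  rw [hsq]
  nlinarith [sq_nonneg (⟪p, a⟫ - t⁻¹ * ‖a‖ ^ 2)]

theorem norm_sub_le_of_abs_sub_sub_inner_le {f : E → ℝ} {g : E → E} {C : ℝ} (hC : 0 ≤ C) {a b : E}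
    (ha : ∀ z, ‖z - a‖ ≤ 2 * ‖a - b‖ → |f z - f a - ⟪g a, z - a⟫| ≤ C * ‖z - a‖ ^ 2)
    (hb : ∀ z, ‖z - b‖ ≤ 2 * ‖a - b‖ → |f z - f b - ⟪g b, z - b⟫| ≤ C * ‖z - b‖ ^ 2) :
    ‖g a - g b‖ ≤ 6 * C * ‖a - b‖ := by
  set d := ‖a - b‖
  rcases (norm_nonneg (a - b)).eq_or_lt with hd | hd
  · obtain rfl : a = b := sub_eq_zero.mp (norm_eq_zero.mp hd.symm)
    simp [d]
  set Δ := g a - g b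
  -- the test point `z` lies at distance `d` from `b` in the direction of `Δ`
  set z := b + (d / ‖Δ‖) • Δ
  have hzb : ‖z - b‖ ≤ d := by
    rw [add_sub_cancel_left, norm_smul, Real.norm_of_nonneg (by positivity)]
    rcases (norm_nonneg Δ).eq_or_lt with hΔ | hΔ
    · rw [← hΔ, mul_zero]; exact hd.le
    · rw [div_mul_cancel₀ _ hΔ.ne']
  have hza : ‖z - a‖ ≤ 2 * d := by
    calc ‖z - a‖ = ‖(z - b) + (b - a)‖ := by congr 1; abel
      _ ≤ ‖z - b‖ + ‖b - a‖ := norm_add_le _ _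
      _ ≤ 2 * d := by rw [norm_sub_rev b a]; linarith
  have hinner : ⟪Δ, z - b⟫ = d * ‖Δ‖ := by
    rw [add_sub_cancel_left, real_inner_smul_right, real_inner_self_eq_norm_sq]
    rcases (norm_nonneg Δ).eq_or_lt with hΔ | hΔ
    · rw [← hΔ]; ring
    · field_simp
  have hcomb : ⟪Δ, z - b⟫ = (f z - f b - ⟪g b, z - b⟫) + (f b - f a - ⟪g a, b - a⟫)
      - (f z - f a - ⟪g a, z - a⟫) := by
    simp only [Δ, inner_sub_left, inner_sub_right]; ring
  have h1 := abs_le.mp (hb z (by linarith))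
  have h2 := abs_le.mp (ha b (by rw [norm_sub_rev]; linarith))
  have h3 := abs_le.mp (ha z hza)
  have hsq1 : C * ‖z - b‖ ^ 2 ≤ C * d ^ 2 := by gcongr
  have hsq3 : C * ‖z - a‖ ^ 2 ≤ C * (2 * d) ^ 2 := by gcongr
  rw [norm_sub_rev b a] at h2
  have : d * ‖Δ‖ ≤ d * (6 * C * d) := by nlinarith
  exact le_of_mul_le_mul_left this hd

theorem lipschitzOnWith_of_abs_sub_sub_inner_le {f : E → ℝ} {g : E → E} {s : Set E} {δ C : ℝ}
    (hC : 0 ≤ C) (hs : ∀ a ∈ s, ∀ b ∈ s, ‖a - b‖ ≤ δ)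
    (h : ∀ x ∈ s, ∀ z, ‖z - x‖ ≤ 2 * δ → |f z - f x - ⟪g x, z - x⟫| ≤ C * ‖z - x‖ ^ 2) :
    LipschitzOnWith (6 * C).toNNReal g s := by
  refine LipschitzOnWith.of_dist_le' fun a ha b hb => ?_
  have hab := hs a ha b hb
  rw [dist_eq_norm, dist_eq_norm]
  exact norm_sub_le_of_abs_sub_sub_inner_le hC
    (fun z hz => h a ha z (by linarith)) (fun z hz => h b hb z (by linarith))

theorem lipschitzOnWith_sSup_image_closedBall {F : Type*} [NormedAddCommGroup F]
    [NormedSpace ℝ F] [ProperSpace F] {f : F → ℝ} {x : F} {t : ℝ} {K : ℝ≥0}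
    (hf : LipschitzOnWith K f (closedBall x t)) :
    LipschitzOnWith K (fun s => sSup (f '' closedBall x s)) (Icc 0 t) := by
  refine LipschitzOnWith.of_le_add_mul K fun s₂ hs₂ s₁ hs₁ => ?_
  refine csSup_le ((nonempty_closedBall.mpr hs₂.1).image f) ?_
  rintro _ ⟨y, hy, rfl⟩
  have hy' : y ∈ closedBall x s₁ + closedBall (0 : F) |s₂ - s₁| := by
    rw [closedBall_add_closedBall hs₁.1 (abs_nonneg _), add_zero]
    exact closedBall_subset_closedBall (by linarith [le_abs_self (s₂ - s₁)]) hy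
  obtain ⟨y₁, hy₁, w, hw, rfl⟩ := hy'
  have hsub : closedBall x s₁ ⊆ closedBall x t := closedBall_subset_closedBall hs₁.2
  have hy₁f : f y₁ ≤ sSup (f '' closedBall x s₁) :=
    le_csSup ((isCompact_closedBall x s₁).bddAbove_image (hf.continuousOn.mono hsub))
      (mem_image_of_mem f hy₁)
  have hlip := hf.dist_le_mul (y₁ + w) (closedBall_subset_closedBall hs₂.2 hy) y₁ (hsub hy₁)
  rw [Real.dist_eq, dist_eq_norm, add_sub_cancel_left] at hlip
  rw [mem_closedBall_zero_iff] at hw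
  calc f (y₁ + w) ≤ f y₁ + K * ‖w‖ := by linarith [le_abs_self (f (y₁ + w) - f y₁)]
    _ ≤ sSup (f '' closedBall x s₁) + K * dist s₂ s₁ := by
      rw [Real.dist_eq]; gcongr

section Eikonal

variable [CompleteSpace E]

structure IsEikonalOn (φ : E → ℝ) (s : Set E) : Prop where
  differentiableAt : ∀ x ∈ s, DifferentiableAt ℝ φ x
  norm_gradient : ∀ x ∈ s, ‖∇ φ x‖ = 1

theorem gradient_fun_neg (φ : E → ℝ) (x : E) : ∇ (fun y => -φ y) x = -∇ φ x := by
  simp only [gradient, fderiv_fun_neg, map_neg]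

theorem DifferentiableAt.hasDerivAt_comp_add_smul {φ : E → ℝ} {x : E}
    (hφ : DifferentiableAt ℝ φ x) (v : E) :
    HasDerivAt (fun τ : ℝ => φ (x + τ • v)) ⟪∇ φ x, v⟫ 0 := by
  have hline : HasDerivAt (fun τ : ℝ => x + τ • v) v 0 := by
    simpa using ((hasDerivAt_id (0 : ℝ)).smul_const v).const_add x
  rw [inner_gradient_left]
  exact hφ.hasFDerivAt.comp_hasDerivAt_of_eq 0 hline (by simp)

theorem add_norm_smul_gradient_eq {φ : E → ℝ} {x y : E}
    (hφ : LipschitzOnWith 1 φ (segment ℝ x y)) (hx : DifferentiableAt ℝ φ x)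
    (hg : ‖∇ φ x‖ = 1) (hxy : φ y = φ x + ‖y - x‖) : x + ‖y - x‖ • ∇ φ x = y := by
  have hseg : ∀ s ∈ Icc (0 : ℝ) 1, φ (x + s • (y - x)) = φ x + s * ‖y - x‖ := by
    intro s hs
    have hmem : x + s • (y - x) ∈ segment ℝ x y := by
      rw [segment_eq_image']; exact mem_image_of_mem _ hs
    have hup := hφ.dist_le_mul _ hmem x (left_mem_segment ℝ x y)
    have hlow := hφ.dist_le_mul y (right_mem_segment ℝ x y) _ hmem
    have e1 : x + s • (y - x) - x = s • (y - x) := by abel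
    have e2 : y - (x + s • (y - x)) = (1 - s) • (y - x) := by rw [sub_smul, one_smul]; abel
    rw [NNReal.coe_one, one_mul, Real.dist_eq, dist_eq_norm, e1, norm_smul,
      Real.norm_of_nonneg hs.1] at hup
    rw [NNReal.coe_one, one_mul, Real.dist_eq, dist_eq_norm, e2, norm_smul,
      Real.norm_of_nonneg (sub_nonneg.mpr hs.2)] at hlow
    have := (abs_le.mp hup).2
    have := (abs_le.mp hlow).2
    nlinarith
  have hline := (hx.hasDerivAt_comp_add_smul (y - x)).hasDerivWithinAt (s := Icc 0 1)
  have haffine : HasDerivWithinAt (fun s : ℝ => φ (x + s • (y - x))) ‖y - x‖ (Icc 0 1) 0 := by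
    refine HasDerivWithinAt.congr_of_mem ?_ hseg (left_mem_Icc.mpr zero_le_one)
    simpa using ((hasDerivAt_id (0 : ℝ)).mul_const ‖y - x‖).const_add (φ x) |>.hasDerivWithinAt
  have hinner : ⟪∇ φ x, y - x⟫ = ‖∇ φ x‖ * ‖y - x‖ := by
    rw [hg, one_mul]
    exact (uniqueDiffOn_Icc zero_lt_one 0 (left_mem_Icc.mpr zero_le_one)).eq_deriv _ hline haffine
  rw [inner_eq_norm_mul_iff_real, hg, one_smul] at hinner
  rw [hinner, add_sub_cancel]

namespace IsEikonalOn

variable {φ : E → ℝ} {s t : Set E}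

theorem mono (h : IsEikonalOn φ s) (hts : t ⊆ s) : IsEikonalOn φ t :=
  ⟨fun x hx => h.differentiableAt x (hts hx), fun x hx => h.norm_gradient x (hts hx)⟩

theorem neg (h : IsEikonalOn φ s) : IsEikonalOn (fun x => -φ x) s :=
  ⟨fun x hx => (h.differentiableAt x hx).neg,
    fun x hx => by rw [gradient_fun_neg, norm_neg, h.norm_gradient x hx]⟩

theorem lipschitzOnWith (h : IsEikonalOn φ s) (hs : Convex ℝ s) : LipschitzOnWith 1 φ s :=
  hs.lipschitzOnWith_of_nnnorm_fderiv_le h.differentiableAt fun x hx => by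
    rw [← (toDual ℝ E).symm.nnnorm_map, ← NNReal.coe_le_coe, coe_nnnorm]
    exact (h.norm_gradient x hx).le

end IsEikonalOn

end Eikonal

section Proper

variable [ProperSpace E]

namespace IsEikonalOn

variable {φ : E → ℝ} {x : E} {t : ℝ}

theorem eventually_lt_slope_sSup_image_closedBall (h : IsEikonalOn φ (closedBall x t))
    {s : ℝ} (hs : s ∈ Ico 0 t) {r : ℝ} (hr : r < 1) :
    ∀ᶠ z in 𝓝[>] s, r < slope (fun s => sSup (φ '' closedBall x s)) s z := by
  have hcont : ∀ u ≤ t, ContinuousOn φ (closedBall x u) := fun u hu y hy =>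
    (h.differentiableAt y (closedBall_subset_closedBall hu hy)).continuousAt.continuousWithinAt
  obtain ⟨y, hy, hMy⟩ := (isCompact_closedBall x s).exists_sSup_image_eq
    (nonempty_closedBall.mpr hs.1) (hcont s hs.2.le)
  have hyt : y ∈ closedBall x t := closedBall_subset_closedBall hs.2.le hy
  set g := ∇ φ y
  have hg : ‖g‖ = 1 := h.norm_gradient y hyt
  -- `χ` follows `φ` from the maximum point `y` along `∇ φ y`: it has slope `1` at `s`,
  -- and at time `z` it is still inside `closedBall x z`
  set χ : ℝ → ℝ := fun z => φ (y + (z - s) • g)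
  have hχ : HasDerivAt χ 1 s := by
    have := (h.differentiableAt y hyt).hasDerivAt_comp_add_smul g
    rw [real_inner_self_eq_norm_sq, hg, one_pow, ← sub_self s] at this
    exact this.comp_sub_const s s
  have hχslope : ∀ᶠ z in 𝓝[>] s, r < slope χ s z :=
    (hasDerivAt_iff_tendsto_slope.mp hχ).mono_left (nhdsGT_le_nhdsNE s) |>.eventually
      (eventually_gt_nhds hr)
  filter_upwards [hχslope, Ioc_mem_nhdsGT hs.2] with z hz hzt
  have hχz : χ z ≤ sSup (φ '' closedBall x z) := by
    refine le_csSup ((isCompact_closedBall x z).bddAbove_image (hcont z hzt.2))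
      (mem_image_of_mem φ ?_)
    rw [mem_closedBall, dist_eq_norm] at hy ⊢
    calc ‖y + (z - s) • g - x‖ = ‖(y - x) + (z - s) • g‖ := by congr 1; abel
      _ ≤ ‖y - x‖ + ‖(z - s) • g‖ := norm_add_le _ _
      _ ≤ z := by
        rw [norm_smul, hg, mul_one, Real.norm_of_nonneg (sub_nonneg.mpr hzt.1.le)]; linarith
  have hχs : χ s = sSup (φ '' closedBall x s) := by simp [χ, hMy]
  refine hz.trans_le ?_
  rw [slope_def_field, slope_def_field, hχs]
  gcongr
  exact sub_nonneg.mpr hzt.1.le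

theorem exists_mem_closedBall_eq_add (h : IsEikonalOn φ (closedBall x t)) (ht : 0 ≤ t) :
    ∃ y ∈ closedBall x t, φ y = φ x + t := by
  set M : ℝ → ℝ := fun s => sSup (φ '' closedBall x s)
  have hlip := h.lipschitzOnWith (convex_closedBall x t)
  have hM : φ x + t ≤ M t := by
    have hfence := image_le_of_liminf_slope_right_le_deriv_boundary
      (f := fun s => φ x + s - M s) (B := fun _ => 0) (B' := fun _ => 0)
      ((continuousOn_const.add continuousOn_id).sub
        (lipschitzOnWith_sSup_image_closedBall hlip).continuousOn)
      (by simp [M]) continuousOn_const (fun _ _ => hasDerivWithinAt_const _ _ _)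
      (fun s hs r hr => ?_) (right_mem_Icc.mpr ht)
    · simpa using hfence
    refine (h.eventually_lt_slope_sSup_image_closedBall hs (sub_lt_self 1 hr)).and
      self_mem_nhdsWithin |>.frequently.mono ?_
    rintro z ⟨hz, hsz : s < z⟩
    rw [slope_def_field, lt_div_iff₀ (sub_pos.mpr hsz)] at hz
    rw [slope_def_field, div_lt_iff₀ (sub_pos.mpr hsz)]
    linarith
  obtain ⟨y, hy, hMy⟩ := (isCompact_closedBall x t).exists_sSup_image_eq
    (nonempty_closedBall.mpr ht) hlip.continuousOn
  have hxy := hlip.dist_le_mul y hy x (mem_closedBall_self ht)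
  rw [NNReal.coe_one, one_mul, Real.dist_eq] at hxy
  exact ⟨y, hy, le_antisymm (by linarith [le_abs_self (φ y - φ x), mem_closedBall.mp hy])
    (hMy ▸ hM)⟩

theorem apply_add_smul_gradient (h : IsEikonalOn φ (closedBall x t)) (ht : 0 ≤ t) :
    φ (x + t • ∇ φ x) = φ x + t := by
  obtain ⟨y, hy, hφy⟩ := h.exists_mem_closedBall_eq_add ht
  have hlip := h.lipschitzOnWith (convex_closedBall x t)
  have hyx : ‖y - x‖ = t := by
    have := hlip.dist_le_mul y hy x (mem_closedBall_self ht)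
    rw [NNReal.coe_one, one_mul, Real.dist_eq, hφy, add_sub_cancel_left, abs_of_nonneg ht,
      dist_eq_norm] at this
    exact le_antisymm (mem_closedBall_iff_norm.mp hy) this
  have hx : x ∈ closedBall x t := mem_closedBall_self ht
  have := add_norm_smul_gradient_eq
    (hlip.mono ((convex_closedBall x t).segment_subset hx hy))
    (h.differentiableAt x hx) (h.norm_gradient x hx) (by rw [hyx, hφy])
  rw [hyx] at this
  rw [this, hφy]

theorem add_inner_sub_le (h : IsEikonalOn φ (closedBall x t)) {z : E} (hz : 2 * ‖z - x‖ ≤ t) :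
    φ x + ⟪∇ φ x, z - x⟫ - t⁻¹ * ‖z - x‖ ^ 2 ≤ φ z := by
  have ht : 0 ≤ t := by linarith [norm_nonneg (z - x)]
  have hg := h.norm_gradient x (mem_closedBall_self ht)
  have hz' : z ∈ closedBall x t := by
    rw [mem_closedBall_iff_norm]; linarith [norm_nonneg (z - x)]
  have hray : x + t • ∇ φ x ∈ closedBall x t := by
    rw [mem_closedBall_iff_norm, add_sub_cancel_left, norm_smul, hg, mul_one,
      Real.norm_of_nonneg ht]
  have hlip := (h.lipschitzOnWith (convex_closedBall x t)).dist_le_mul _ hray z hz'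
  rw [NNReal.coe_one, one_mul, Real.dist_eq, dist_eq_norm, h.apply_add_smul_gradient ht,
    ← norm_neg, show -(x + t • ∇ φ x - z) = z - x - t • ∇ φ x by abel] at hlip
  linarith [le_abs_self (φ x + t - φ z), norm_sub_smul_le_of_norm_eq_one hg hz]

theorem abs_sub_sub_inner_le (h : IsEikonalOn φ (closedBall x t)) {z : E}
    (hz : 2 * ‖z - x‖ ≤ t) : |φ z - φ x - ⟪∇ φ x, z - x⟫| ≤ t⁻¹ * ‖z - x‖ ^ 2 := by
  have hlow := h.add_inner_sub_le hz
  have hup := h.neg.add_inner_sub_le hz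
  rw [gradient_fun_neg, inner_neg_left] at hup
  exact abs_le.mpr ⟨by linarith, by linarith⟩

end IsEikonalOn

end Proper

theorem eikonal_gradient_locally_lipschitz {N : ℕ} {Ω : Set (EuclideanSpace ℝ (Fin N))}
    (hΩ : IsOpen Ω) (φ : EuclideanSpace ℝ (Fin N) → ℝ)
    (hdiff : ∀ x ∈ Ω, DifferentiableAt ℝ φ x)
    (heik : ∀ x ∈ Ω, ‖gradient φ x‖ = 1) :
    ∀ x ∈ Ω, ∃ s ∈ nhds x, s ⊆ Ω ∧
      ∃ K : NNReal, LipschitzOnWith K (fun y => gradient φ y) s := by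
  intro x₀ hx₀
  obtain ⟨ε, hε, hεΩ⟩ := Metric.isOpen_iff.mp hΩ x₀ hx₀
  obtain ⟨r, hr, rfl⟩ : ∃ r, 0 < r ∧ ε = 10 * r := ⟨ε / 10, by positivity, by ring⟩
  have hφ : IsEikonalOn φ Ω := ⟨hdiff, heik⟩
  have hballΩ : ∀ x ∈ ball x₀ r, closedBall x (8 * r) ⊆ Ω := fun x hx =>
    (closedBall_subset_ball' (by linarith [mem_ball.mp hx])).trans hεΩ
  refine ⟨ball x₀ r, ball_mem_nhds x₀ hr,
    fun x hx => hballΩ x hx (mem_closedBall_self (by positivity)), _,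
    lipschitzOnWith_of_abs_sub_sub_inner_le (δ := 2 * r) (by positivity) (fun a ha b hb => ?_)
      fun x hx z hz => (hφ.mono (hballΩ x hx)).abs_sub_sub_inner_le (by linarith)⟩
  rw [← dist_eq_norm]
  linarith [dist_triangle_right a b x₀, mem_ball.mp ha, mem_ball.mp hb]
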